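/- Let m be Lebesgue measure on [0,1]. Then for every Borel set A ⊆ [0,1], (Vm)(A) = ∫_A (2q·x + 2p·(1−x)) dx; that is, Vm is the measure with density x ↦ 2q·x + 2p·(1−x) with respect to Lebesgue measure on [0,1]. -/

import Mathlib

open MeasureTheory Set Filter Topology ENNReal

/-- The unit interval `[0,1]` as a measurable space (with the Borel σ-algebra). -/
abbrev UnitInt : Type := ↥(Set.Icc (0:ℝ) 1)

/-- The family of measures `P(x,y,·)`: `p·δ_x + q·δ_y` if `x < y`, `δ_x` if `x = y`,
and `p·δ_y + q·δ_x` if `x > y`. -/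
noncomputable def Pker (p q : ℝ) (x y : UnitInt) : Measure UnitInt :=
  if x < y then ENNReal.ofReal p • Measure.dirac x + ENNReal.ofReal q • Measure.dirac y
  else if y < x then ENNReal.ofReal p • Measure.dirac y + ENNReal.ofReal q • Measure.dirac x
  else Measure.dirac x

/-!
The kernel puts mass `p` at `min x y` and mass `q` at `max x y`, so `Vm` is the mixture, with
weights `p` and `q`, of the laws of the minimum and the maximum of two independent uniform
points. Cutting the square along the diagonal and swapping the order of integration on one half
gives `∫∫ f (max x y) = ∫ f x · (m (Iic x) + m (Iio x))`, i.e. the maximum has density `2x`; the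
minimum is the maximum for the reversed order, with density `2(1 - x)`.
-/

section OrderStatistics

variable {α : Type*} [LinearOrder α] [TopologicalSpace α] [OrderClosedTopology α]
  [SecondCountableTopology α] [MeasurableSpace α] [OpensMeasurableSpace α]
  (μ : Measure α) [SFinite μ] {f : α → ℝ≥0∞}

theorem lintegral_lintegral_max (hf : Measurable f) :
    ∫⁻ x, ∫⁻ y, f (max x y) ∂μ ∂μ = ∫⁻ x, f x * (μ (Iic x) + μ (Iio x)) ∂μ := by
  have hsplit : ∀ x y,
      f (max x y) = (Iic x).indicator (fun _ ↦ f x) y + (Ioi x).indicator f y := by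
    intro x y
    rcases le_or_gt y x with h | h
    · simp [h, not_lt.2 h]
    · simp [h, max_eq_right h.le, not_le.2 h]
  have hupper : Measurable (Function.uncurry fun x y ↦ (Ioi x).indicator f y) := by
    change Measurable ({p : α × α | p.1 < p.2}.indicator fun p ↦ f p.2)
    exact (hf.comp measurable_snd).indicator (measurableSet_lt measurable_fst measurable_snd)
  have hIio : Measurable fun x ↦ μ (Iio x) :=
    measurable_measure_prodMk_left (measurableSet_lt measurable_snd measurable_fst)
  calc ∫⁻ x, ∫⁻ y, f (max x y) ∂μ ∂μ
      = ∫⁻ x, (f x * μ (Iic x) + ∫⁻ y, (Ioi x).indicator f y ∂μ) ∂μ := by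
        congr 1 with x
        simp_rw [hsplit x]
        rw [lintegral_add_left (measurable_const.indicator measurableSet_Iic),
          lintegral_indicator_const measurableSet_Iic]
    _ = ∫⁻ x, f x * μ (Iic x) ∂μ + ∫⁻ y, ∫⁻ x, (Iio y).indicator (fun _ ↦ f y) x ∂μ ∂μ := by
        have hinner : Measurable fun x ↦ ∫⁻ y, (Ioi x).indicator f y ∂μ :=
          hupper.lintegral_prod_right'
        rw [lintegral_add_right _ hinner, lintegral_lintegral_swap hupper.aemeasurable]
        rfl
    _ = _ := by
        simp_rw [lintegral_indicator_const measurableSet_Iio, mul_add]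
        exact (lintegral_add_right _ (hf.mul hIio)).symm

theorem lintegral_lintegral_min (hf : Measurable f) :
    ∫⁻ x, ∫⁻ y, f (min x y) ∂μ ∂μ = ∫⁻ x, f x * (μ (Ici x) + μ (Ioi x)) ∂μ :=
  @lintegral_lintegral_max αᵒᵈ _ _ _ _ _ _ μ ‹SFinite μ› f hf

end OrderStatistics

namespace unitInterval

variable {f : I → ℝ≥0∞}

theorem lintegral_lintegral_max (hf : Measurable f) :
    ∫⁻ x, ∫⁻ y, f (max x y) = ∫⁻ x, f x * ENNReal.ofReal (2 * x) := by
  rw [_root_.lintegral_lintegral_max volume hf]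
  congr 1 with x
  rw [volume_Iic, volume_Iio, ← ENNReal.ofReal_add x.2.1 x.2.1, two_mul]

theorem lintegral_lintegral_min (hf : Measurable f) :
    ∫⁻ x, ∫⁻ y, f (min x y) = ∫⁻ x, f x * ENNReal.ofReal (2 * (1 - x)) := by
  rw [_root_.lintegral_lintegral_min volume hf]
  congr 1 with x
  have hx : 0 ≤ 1 - (x : ℝ) := sub_nonneg.2 x.2.2
  rw [volume_Ici, volume_Ioi, ← ENNReal.ofReal_add hx hx, two_mul]

end unitInterval

theorem Pker_eq_dirac_min_max {p q : ℝ} (hp : 0 ≤ p) (hq : 0 ≤ q) (hpq : p + q = 1)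
    (x y : UnitInt) :
    Pker p q x y = ENNReal.ofReal p • Measure.dirac (min x y)
      + ENNReal.ofReal q • Measure.dirac (max x y) := by
  rcases lt_trichotomy x y with h | rfl | h
  · simp [Pker, h, min_eq_left h.le, max_eq_right h.le]
  · rw [Pker, if_neg (lt_irrefl x), if_neg (lt_irrefl x), min_self, max_self, ← add_smul,
      ← ENNReal.ofReal_add hp hq, hpq, ENNReal.ofReal_one, one_smul]
  · simp [Pker, h, not_lt.2 h.le, min_eq_right h.le, max_eq_left h.le]

theorem V_lebesgue_density (p q : ℝ) (hp : 0 ≤ p) (hq : 0 ≤ q) (hpq : p + q = 1)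
    (V : Measure UnitInt → Measure UnitInt)
    (hV : ∀ (μ : Measure UnitInt) (A : Set UnitInt), MeasurableSet A →
      V μ A = ∫⁻ x, ∫⁻ y, Pker p q x y A ∂μ ∂μ) :
    ∀ A : Set UnitInt, MeasurableSet A →
      V (volume : Measure UnitInt) A
        = ∫⁻ x in A, ENNReal.ofReal (2*q*(x:ℝ) + 2*p*(1 - (x:ℝ))) ∂(volume : Measure UnitInt) := by
  intro A hA
  have hind : Measurable (A.indicator (1 : UnitInt → ℝ≥0∞)) := measurable_one.indicator hA
  calc V volume A
      = ∫⁻ x, ∫⁻ y, (ENNReal.ofReal p * A.indicator 1 (min x y)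
          + ENNReal.ofReal q * A.indicator 1 (max x y)) := by
        simp_rw [hV volume A hA, Pker_eq_dirac_min_max hp hq hpq, Measure.add_apply,
          Measure.smul_apply, Measure.dirac_apply' _ hA, smul_eq_mul]
    _ = ENNReal.ofReal p * (∫⁻ x, ∫⁻ y, A.indicator 1 (min x y))
          + ENNReal.ofReal q * ∫⁻ x, ∫⁻ y, A.indicator 1 (max x y) := by
        rw [← lintegral_const_mul' _ _ ofReal_ne_top, ← lintegral_const_mul' _ _ ofReal_ne_top,
          ← lintegral_add_left (by fun_prop)]
        congr 1 with x
        rw [← lintegral_const_mul' _ _ ofReal_ne_top, ← lintegral_const_mul' _ _ ofReal_ne_top,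
          ← lintegral_add_left (by fun_prop)]
    _ = ∫⁻ x in A, (ENNReal.ofReal p * ENNReal.ofReal (2 * (1 - x))
          + ENNReal.ofReal q * ENNReal.ofReal (2 * x)) := by
        rw [unitInterval.lintegral_lintegral_min hind, unitInterval.lintegral_lintegral_max hind,
          ← lintegral_const_mul' _ _ ofReal_ne_top, ← lintegral_const_mul' _ _ ofReal_ne_top,
          ← lintegral_add_left (by fun_prop), ← lintegral_indicator hA]
        congr 1 with x
        by_cases hx : x ∈ A <;> simp [hx]
    _ = _ := by
        refine lintegral_congr fun x ↦ ?_
        have hx₀ : 0 ≤ (x : ℝ) := x.2.1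
        have hx₁ : 0 ≤ 1 - (x : ℝ) := sub_nonneg.2 x.2.2
        rw [← ENNReal.ofReal_mul hp, ← ENNReal.ofReal_mul hq,
          ← ENNReal.ofReal_add (by positivity) (by positivity)]
        ring_nf
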